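/- Every fixed point of a monotone operator Φ (an =-model) is also a ⊒-model, but the meet of two fixed points need not be a fixed point: there exists a monotone function Φ on FOUR⁴ (corresponding to the program p :- p; q :- q; r :- p ∨ q ∨ s; s :- p ∨ q ∨ ¬r) with fixed points M = (t,f,t,t) and N = (f,t,t,t) whose meet M ⊓ N = (u,u,t,t) satisfies Φ(M ⊓ N) = (u,u,t,u) ≠ M ⊓ N. -/

import Mathlib

set_option linter.unusedVariables false

inductive Four : Type where
  | u | f | t | i
deriving DecidableEq, Repr

instance Four.instFintype : Fintype Four where
  elems := {Four.u, Four.f, Four.t, Four.i}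
  complete := by intro x; cases x <;> simp

namespace Four

/-- The truth ordering on FOUR: `f` bottom, `t` top, `u` and `i` incomparable. -/
def tle : Four → Four → Prop := fun x y => x = f ∨ y = t ∨ x = y

/-- The information ordering on FOUR: `u` bottom, `i` top, `f` and `t` incomparable. -/
def sq : Four → Four → Prop := fun x y => x = u ∨ y = i ∨ x = y

instance : DecidableRel tle := fun x y => by unfold tle; infer_instance
instance : DecidableRel sq := fun x y => by unfold sq; infer_instance

/-- Belnap conjunction: meet in the truth ordering. -/
def tand : Four → Four → Four
  | f, _ => f
  | _, f => f
  | t, y => y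
  | x, t => x
  | u, u => u
  | i, i => i
  | u, i => f
  | i, u => f

/-- Belnap disjunction: join in the truth ordering. -/
def tor : Four → Four → Four
  | t, _ => t
  | _, t => t
  | f, y => y
  | x, f => x
  | u, u => u
  | i, i => i
  | u, i => t
  | i, u => t

/-- Consensus: meet in the information ordering. -/
def imeet : Four → Four → Four
  | u, _ => u
  | _, u => u
  | i, y => y
  | x, i => x
  | f, f => f
  | t, t => t
  | f, t => u
  | t, f => u

/-- Gullibility: join in the information ordering. -/
def ijoin : Four → Four → Four
  | i, _ => i
  | _, i => i
  | u, y => y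
  | x, u => x
  | f, f => f
  | t, t => t
  | f, t => i
  | t, f => i

/-- Belnap negation. -/
def neg : Four → Four
  | u => u
  | f => t
  | t => f
  | i => i

end Four

open Four

/-- The information ordering lifted componentwise to quadruples. -/
def sq4 (a b : Four × Four × Four × Four) : Prop :=
  sq a.1 b.1 ∧ sq a.2.1 b.2.1 ∧ sq a.2.2.1 b.2.2.1 ∧ sq a.2.2.2 b.2.2.2

/-- The componentwise information meet on quadruples. -/
def imeet4 (a b : Four × Four × Four × Four) : Four × Four × Four × Four :=
  (imeet a.1 b.1, imeet a.2.1 b.2.1, imeet a.2.2.1 b.2.2.1, imeet a.2.2.2 b.2.2.2)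

/-- The immediate consequence operator of the program
`p :- p.  q :- q.  r :- p ∨ q ∨ s.  s :- p ∨ q ∨ ¬r.` -/
def Phi (a : Four × Four × Four × Four) : Four × Four × Four × Four :=
  match a with
  | (p, q, r, s) => (p, q, tor (tor p q) s, tor (tor p q) (neg r))

theorem rel_apply_self_of_isFixedPt {L : Type*} {le : L → L → Prop} (hrefl : ∀ x, le x x)
    {Φ : L → L} {I : L} (hI : Function.IsFixedPt Φ I) : le (Φ I) I :=
  hI.symm ▸ hrefl I

namespace Four

theorem tor_sq_mono {x x' y y' : Four} : sq x x' → sq y y' → sq (tor x y) (tor x' y') := by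
  revert x x' y y'
  decide

-- Negation reverses the truth order but preserves the information order.
theorem neg_sq_mono {x x' : Four} : sq x x' → sq (neg x) (neg x') := by
  revert x x'
  decide

end Four

theorem Phi_sq4_mono {a b : Four × Four × Four × Four} (h : sq4 a b) : sq4 (Phi a) (Phi b) := by
  obtain ⟨p, q, r, s⟩ := a
  obtain ⟨p', q', r', s'⟩ := b
  obtain ⟨hp, hq, hr, hs⟩ := h
  have hpq := tor_sq_mono hp hq
  exact ⟨hp, hq, tor_sq_mono hpq hs, tor_sq_mono hpq (neg_sq_mono hr)⟩

/-- every fixed point of a monotone operator (an `=`-model) is a `⊒`-model,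
but the meet of two fixed points need not be a fixed point: the monotone operator `Phi`
on FOUR⁴ has fixed points `M = (t,f,t,t)` and `N = (f,t,t,t)` whose information meet
`(u,u,t,t)` is mapped by `Phi` to `(u,u,t,u)`, hence is not a fixed point. -/
theorem fixed_points_are_sqmodels_but_meet_may_not_be_fixed :
    (∀ (L : Type) (le : L → L → Prop), (∀ x, le x x) →
      ∀ (Φ : L → L), (∀ x y, le x y → le (Φ x) (Φ y)) →
        ∀ I, Φ I = I → le (Φ I) I) ∧
    (∀ a b, sq4 a b → sq4 (Phi a) (Phi b)) ∧
    Phi (.t, .f, .t, .t) = (.t, .f, .t, .t) ∧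
    Phi (.f, .t, .t, .t) = (.f, .t, .t, .t) ∧
    imeet4 (.t, .f, .t, .t) (.f, .t, .t, .t) = (.u, .u, .t, .t) ∧
    Phi (.u, .u, .t, .t) = (.u, .u, .t, .u) ∧
    Phi (.u, .u, .t, .t) ≠ (.u, .u, .t, .t) := by
  refine ⟨fun L le hrefl Φ _ I hI => rel_apply_self_of_isFixedPt hrefl hI,
    fun _ _ => Phi_sq4_mono, rfl, rfl, rfl, rfl, ?_⟩
  decide
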